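/- arXiv:2403.07878 — 3 statements merged into one kernel-verified Lean document; each statement's English description precedes it below -/
import Mathlib

section
/- For any integer t and non-negative integer n: sum_{k=0}^n binom(n,k) * (-1)^k * F_{n-2k-1+t} / (k+1) = (F_{n+1+t} - F_t) / (n+1), and the same identity holds with F replaced by L throughout. -/
open Finset

/-- Lucas numbers on naturals. -/
def lucasNat : ℕ → ℤ
  | 0 => 2
  | 1 => 1
  | n + 2 => lucasNat (n + 1) + lucasNat n

/-- Fibonacci numbers extended to integer indices: `F_{-m} = (-1)^(m-1) F_m`. -/
def fibZ (n : ℤ) : ℤ :=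
  if 0 ≤ n then (Nat.fib n.toNat : ℤ) else (-1) ^ ((-n).toNat + 1) * (Nat.fib (-n).toNat : ℤ)

/-- Lucas numbers extended to integer indices: `L_{-m} = (-1)^m L_m`. -/
def lucasZ (n : ℤ) : ℤ :=
  if 0 ≤ n then lucasNat n.toNat else (-1) ^ (-n).toNat * lucasNat (-n).toNat


/-!
Write `E` for the shift `a ↦ a (· + 1)`. A sequence `a : ℤ → R` obeying the Fibonacci recurrence
at every integer index satisfies `a (t + 1) - a (t - 1) = a t`, i.e. `E - E⁻¹` fixes it, and so
does `(E - E⁻¹) ^ m`; expanded binomially this reads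
`∑ i, (m.choose i) (-1) ^ i a (t + m - 2 i) = a t`. For `m = n + 1`, after splitting off `i = 0`
and absorbing `(n + 1).choose (k + 1) = (n + 1) / (k + 1) * n.choose k`, this becomes the stated
identity for every such sequence, in particular for `fibZ` and `lucasZ`.
-/

def IsFibonacciLike {R : Type*} [Add R] (a : ℤ → R) : Prop :=
  ∀ m : ℤ, a (m + 2) = a (m + 1) + a m

namespace IsFibonacciLike

variable {R S : Type*} [CommRing R]

theorem of_natCast_of_neg {a : ℤ → R} (c : R) (hnat : ∀ n : ℕ, a ↑(n + 2) = a ↑(n + 1) + a n)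
    (hneg : ∀ n : ℕ, a (-n) = c * (-1) ^ n * a n) (hone : a 1 = a 0 + a (-1)) :
    IsFibonacciLike a := by
  intro m
  obtain ⟨n, rfl | rfl⟩ := Int.eq_nat_or_neg m
  · exact_mod_cast hnat n
  rcases n with _ | _ | n
  · simpa using hnat 0
  · simpa using hone
  · have e₂ : -((n + 2 : ℕ) : ℤ) + 2 = -(n : ℤ) := by push_cast; ring
    have e₁ : -((n + 2 : ℕ) : ℤ) + 1 = -((n + 1 : ℕ) : ℤ) := by push_cast; ring
    rw [e₂, e₁, hneg, hneg, hneg, show n + 1 + 1 = n + 2 from rfl, hnat n]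
    ring

theorem map [CommRing S] {a : ℤ → R} (h : IsFibonacciLike a) (f : R →+* S) :
    IsFibonacciLike (f ∘ a) := fun m => by simp [h m]

theorem sum_antidiagonal_choose_mul {a : ℤ → R} (h : IsFibonacciLike a) (m : ℕ) (t : ℤ) :
    ∑ ij ∈ antidiagonal m, (m.choose ij.1 : R) * ((-1) ^ ij.1 * a (t + ij.2 - ij.1)) = a t := by
  induction m generalizing t with
  | zero => simp
  | succ m ih =>
    rw [sum_antidiagonal_choose_succ_mul (fun i j => (-1) ^ i * a (t + j - i))]
    have up : ∑ ij ∈ antidiagonal m,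
        (m.choose ij.1 : R) * ((-1) ^ ij.1 * a (t + (ij.2 + 1 : ℕ) - ij.1)) = a (t + 1) := by
      rw [← ih (t + 1)]
      refine sum_congr rfl fun ij _ => ?_
      push_cast
      ring_nf
    have down : ∑ ij ∈ antidiagonal m,
        (m.choose ij.2 : R) * ((-1) ^ (ij.1 + 1) * a (t + ij.2 - (ij.1 + 1 : ℕ))) = -a (t - 1) := by
      rw [← ih (t - 1), ← sum_neg_distrib]
      refine sum_congr rfl fun ij hij => ?_
      rw [Nat.choose_symm_of_eq_add (mem_antidiagonal.1 hij).symm]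
      push_cast
      ring_nf
    have hrec : a (t + 1) = a t + a (t - 1) := by
      simpa [show t - 1 + 2 = t + 1 by ring] using h (t - 1)
    rw [up, down, hrec]
    ring

theorem sum_range_choose_mul {a : ℤ → R} (h : IsFibonacciLike a) (m : ℕ) (t : ℤ) :
    ∑ i ∈ range (m + 1), (m.choose i : R) * ((-1) ^ i * a (t + m - 2 * i)) = a t := by
  rw [← h.sum_antidiagonal_choose_mul m t, Nat.sum_antidiagonal_eq_sum_range_succ
    (fun i j => (m.choose i : R) * ((-1) ^ i * a (t + j - i)))]
  refine sum_congr rfl fun i hi => ?_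
  rw [Nat.cast_sub (mem_range_succ_iff.1 hi)]
  ring_nf

end IsFibonacciLike

theorem Nat.cast_choose_div_add_one {K : Type*} [Field K] [CharZero K] (n k : ℕ) :
    (n.choose k : K) / (k + 1) = ((n + 1).choose (k + 1) : K) / (n + 1) := by
  rw [div_eq_div_iff (Nat.cast_add_one_ne_zero k) (Nat.cast_add_one_ne_zero n)]
  exact_mod_cast (mul_comm _ _).trans (Nat.add_one_mul_choose_eq n k)

theorem IsFibonacciLike.sum_range_choose_mul_div {K : Type*} [Field K] [CharZero K] {a : ℤ → K}
    (h : IsFibonacciLike a) (t : ℤ) (n : ℕ) :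
    ∑ k ∈ range (n + 1), (n.choose k : K) * (-1) ^ k * a ((n : ℤ) - 2 * k - 1 + t) / (k + 1) =
      (a (n + 1 + t) - a t) / (n + 1) := by
  have hS : ∑ k ∈ range (n + 1), ((n + 1).choose (k + 1) : K) * (-1) ^ k *
      a ((n : ℤ) - 2 * k - 1 + t) = a (n + 1 + t) - a t := by
    have hsum := h.sum_range_choose_mul (n + 1) t
    have hterm : ∀ k ∈ range (n + 1), ((n + 1).choose (k + 1) : K) *
        ((-1) ^ (k + 1) * a (t + (n + 1 : ℕ) - 2 * (k + 1 : ℕ))) =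
        -(((n + 1).choose (k + 1) : K) * (-1) ^ k * a ((n : ℤ) - 2 * k - 1 + t)) := by
      intro k _
      rw [show t + (n + 1 : ℕ) - 2 * (k + 1 : ℕ) = (n : ℤ) - 2 * k - 1 + t by push_cast; ring]
      ring
    rw [sum_range_succ', sum_congr rfl hterm, sum_neg_distrib,
      show t + (n + 1 : ℕ) - 2 * (0 : ℕ) = (n : ℤ) + 1 + t by push_cast; ring] at hsum
    simp only [Nat.choose_zero_right, Nat.cast_one, pow_zero, one_mul] at hsum
    linear_combination -hsum
  rw [← hS, sum_div]
  refine sum_congr rfl fun k _ => ?_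
  rw [mul_assoc, mul_div_right_comm, Nat.cast_choose_div_add_one, mul_assoc, mul_div_right_comm]

theorem fibZ_natCast (n : ℕ) : fibZ n = Nat.fib n := by simp [fibZ]

theorem fibZ_neg_natCast (n : ℕ) : fibZ (-n) = -(-1) ^ n * fibZ n := by
  rcases n.eq_zero_or_pos with rfl | hn
  · simp [fibZ]
  · simp [fibZ, hn.ne', pow_succ]

theorem isFibonacciLike_fibZ : IsFibonacciLike fibZ :=
  .of_natCast_of_neg (-1) (fun n => by simp only [fibZ_natCast, Nat.fib_add_two]; push_cast; ring)
    (fun n => by rw [fibZ_neg_natCast]; ring) (by decide)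

theorem lucasZ_natCast (n : ℕ) : lucasZ n = lucasNat n := by simp [lucasZ]

theorem lucasZ_neg_natCast (n : ℕ) : lucasZ (-n) = (-1) ^ n * lucasZ n := by
  rcases n.eq_zero_or_pos with rfl | hn
  · simp [lucasZ]
  · simp [lucasZ, hn.ne']

theorem isFibonacciLike_lucasZ : IsFibonacciLike lucasZ :=
  .of_natCast_of_neg 1 (fun n => by simp only [lucasZ_natCast, lucasNat])
    (fun n => by rw [lucasZ_neg_natCast]; ring) (by decide)

theorem stmt_8 (t : ℤ) (n : ℕ) :
    (∑ k ∈ range (n + 1),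
      (n.choose k : ℚ) * (-1) ^ k * (fibZ ((n : ℤ) - 2 * k - 1 + t) : ℚ) / (k + 1) =
      ((fibZ (n + 1 + t) : ℚ) - fibZ t) / (n + 1)) ∧
    (∑ k ∈ range (n + 1),
      (n.choose k : ℚ) * (-1) ^ k * (lucasZ ((n : ℤ) - 2 * k - 1 + t) : ℚ) / (k + 1) =
      ((lucasZ (n + 1 + t) : ℚ) - lucasZ t) / (n + 1)) :=
  ⟨(isFibonacciLike_fibZ.map (Int.castRingHom ℚ)).sum_range_choose_mul_div t n,
    (isFibonacciLike_lucasZ.map (Int.castRingHom ℚ)).sum_range_choose_mul_div t n⟩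
end

section
/- For any integer t and non-negative integer n: sum_{k=0}^n binom(n,k) * (-1)^k * 3^(n-k) * F_{2(n+k+2)+t} / (k+1) = (3^(n+1) * F_{2n+2+t} - F_t) / (n+1), and the same identity holds with F replaced by L. -/
open Finset

/-!
By Binet's formulas `F_m` and `L_m` are linear combinations of `φ ^ m` and `ψ ^ m`, so it suffices
to prove the identity for `c ^ m` with `c ^ 2 = c + 1`. Writing `q = c ^ 2`, the sum is then
`q ^ (n + 2) c ^ t` times the integrated binomial sum
`∑ C(n,k) x^k y^(n-k) / (k+1) = ((x + y) ^ (n + 1) - y ^ (n + 1)) / ((n + 1) x)`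
at `x = -q`, `y = 3`, and `c ^ 2 = c + 1` gives `3 - q = q⁻¹`.
-/

open scoped goldenRatio

section BinomialSums

variable {K : Type*} [Field K] [CharZero K]

theorem sum_choose_mul_pow_mul_pow_div_succ {x : K} (hx : x ≠ 0) (y : K) (n : ℕ) :
    ∑ k ∈ range (n + 1), (n.choose k : K) * x ^ k * y ^ (n - k) / (k + 1)
      = ((x + y) ^ (n + 1) - y ^ (n + 1)) / ((n + 1) * x) := by
  have hterm : ∀ k ∈ range (n + 1), (n.choose k : K) * x ^ k * y ^ (n - k) / (k + 1)
      = x ^ (k + 1) * y ^ (n + 1 - (k + 1)) * (n + 1).choose (k + 1) / ((n + 1) * x) := by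
    intro k _
    have hchoose : ((n : K) + 1) * n.choose k = (n + 1).choose (k + 1) * (k + 1) := by
      exact_mod_cast Nat.add_one_mul_choose_eq n k
    rw [Nat.add_sub_add_right, div_eq_div_iff (Nat.cast_add_one_ne_zero k)
      (mul_ne_zero (Nat.cast_add_one_ne_zero n) hx)]
    linear_combination x ^ (k + 1) * y ^ (n - k) * hchoose
  have hbinom : (x + y) ^ (n + 1) = ∑ k ∈ range (n + 1),
      x ^ (k + 1) * y ^ (n + 1 - (k + 1)) * (n + 1).choose (k + 1) + y ^ (n + 1) := by
    simp [add_pow, sum_range_succ']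
  rw [sum_congr rfl hterm, ← sum_div, hbinom, add_sub_cancel_right]

theorem sum_choose_mul_three_pow_mul_zpow_div_succ {c : K} (hc : c ≠ 0)
    (hc3 : (3 - c ^ 2) * c ^ 2 = 1) (t : ℤ) (n : ℕ) :
    ∑ k ∈ range (n + 1),
      (n.choose k : K) * (-1) ^ k * 3 ^ (n - k) * c ^ (2 * ((n : ℤ) + k + 2) + t) / (k + 1)
      = (3 ^ (n + 1) * c ^ (2 * (n : ℤ) + 2 + t) - c ^ t) / (n + 1) := by
  have hzpow (m : ℕ) : c ^ (2 * (m : ℤ) + t) = (c ^ 2) ^ m * c ^ t := by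
    rw [zpow_add₀ hc, ← pow_mul, ← zpow_natCast, Nat.cast_mul, Nat.cast_two]
  have hq : -c ^ 2 ≠ 0 := neg_ne_zero.mpr (pow_ne_zero 2 hc)
  have hsum : ∑ k ∈ range (n + 1),
      (n.choose k : K) * (-1) ^ k * 3 ^ (n - k) * c ^ (2 * ((n : ℤ) + k + 2) + t) / (k + 1)
      = (∑ k ∈ range (n + 1), (n.choose k : K) * (-c ^ 2) ^ k * 3 ^ (n - k) / (k + 1))
        * ((c ^ 2) ^ (n + 2) * c ^ t) := by
    rw [sum_mul]
    refine sum_congr rfl fun k _ => ?_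
    rw [show (n : ℤ) + k + 2 = ((n + k + 2 : ℕ) : ℤ) by push_cast; ring, hzpow]
    ring
  have hcollapse : (-c ^ 2 + 3) ^ (n + 1) * (c ^ 2) ^ (n + 1) = 1 := by
    rw [← mul_pow, neg_add_eq_sub, hc3, one_pow]
  rw [hsum, sum_choose_mul_pow_mul_pow_div_succ hq,
    show 2 * (n : ℤ) + 2 + t = 2 * ((n + 1 : ℕ) : ℤ) + t by push_cast; ring, hzpow,
    div_mul_eq_mul_div, div_eq_div_iff (mul_ne_zero (Nat.cast_add_one_ne_zero n) hq)
    (Nat.cast_add_one_ne_zero n)]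
  linear_combination (n + 1 : K) * c ^ 2 * c ^ t * hcollapse

end BinomialSums

theorem three_sub_sq_mul_sq_of_sq_eq_add_one {K : Type*} [CommRing K] {c : K}
    (hc : c ^ 2 = c + 1) : (3 - c ^ 2) * c ^ 2 = 1 := by
  linear_combination (-c ^ 2 - c + 1) * hc

theorem sum_choose_mul_three_pow_mul_div_succ_of_binet {u : ℤ → ℤ} (a b : ℝ)
    (hu : ∀ m, (u m : ℝ) = a * φ ^ m + b * ψ ^ m) (t : ℤ) (n : ℕ) :
    ∑ k ∈ range (n + 1),
      (n.choose k : ℚ) * (-1) ^ k * (3 : ℚ) ^ (n - k) * (u (2 * ((n : ℤ) + k + 2) + t) : ℚ)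
        / (k + 1)
      = (3 ^ (n + 1) * (u (2 * n + 2 + t) : ℚ) - u t) / (n + 1) := by
  have hφ := sum_choose_mul_three_pow_mul_zpow_div_succ Real.goldenRatio_ne_zero
    (three_sub_sq_mul_sq_of_sq_eq_add_one Real.goldenRatio_sq) t n
  have hψ := sum_choose_mul_three_pow_mul_zpow_div_succ Real.goldenConj_ne_zero
    (three_sub_sq_mul_sq_of_sq_eq_add_one Real.goldenConj_sq) t n
  apply Rat.cast_injective (α := ℝ)
  push_cast
  simp only [hu]
  calc _ = a * ∑ k ∈ range (n + 1), (n.choose k : ℝ) * (-1) ^ k * 3 ^ (n - k) *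
          φ ^ (2 * ((n : ℤ) + k + 2) + t) / (k + 1)
        + b * ∑ k ∈ range (n + 1), (n.choose k : ℝ) * (-1) ^ k * 3 ^ (n - k) *
          ψ ^ (2 * ((n : ℤ) + k + 2) + t) / (k + 1) := by
        rw [mul_sum, mul_sum, ← sum_add_distrib]
        exact sum_congr rfl fun k _ => by ring
    _ = _ := by
        rw [hφ, hψ]
        ring

theorem fibZ_eq_intFib (m : ℤ) : fibZ m = Int.fib m := by
  unfold fibZ
  split_ifs with hm
  · exact (Int.fib_of_nonneg hm).symm
  · obtain ⟨j, rfl⟩ : ∃ j : ℕ, m = -j := ⟨(-m).toNat, by omega⟩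
    rw [Int.fib_neg_natCast, neg_neg, Int.toNat_natCast]

theorem cast_lucasNat (n : ℕ) : (lucasNat n : ℝ) = φ ^ n + ψ ^ n := by
  induction n using Nat.twoStepInduction with
  | zero => norm_num [lucasNat]
  | one => simp [lucasNat, Real.goldenRatio_add_goldenConj]
  | more n ih0 ih1 =>
    rw [lucasNat, Int.cast_add, ih0, ih1]
    linear_combination (-φ ^ n) * Real.goldenRatio_sq - ψ ^ n * Real.goldenConj_sq

theorem cast_lucasZ (m : ℤ) : (lucasZ m : ℝ) = φ ^ m + ψ ^ m := by
  unfold lucasZ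
  split_ifs with hm
  · rw [cast_lucasNat, ← zpow_natCast, ← zpow_natCast, Int.toNat_of_nonneg hm]
  · obtain ⟨j, rfl⟩ : ∃ j : ℕ, m = -j := ⟨(-m).toNat, by omega⟩
    rw [neg_neg, Int.toNat_natCast, Int.cast_mul, Int.cast_pow, Int.cast_neg, Int.cast_one,
      cast_lucasNat, zpow_neg, zpow_neg, zpow_natCast, zpow_natCast, ← inv_pow, ← inv_pow,
      Real.inv_goldenRatio, Real.inv_goldenConj, neg_pow φ, neg_pow ψ]
    ring

theorem stmt_12 (t : ℤ) (n : ℕ) :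
    (∑ k ∈ range (n + 1),
      (n.choose k : ℚ) * (-1) ^ k * (3 : ℚ) ^ (n - k) * (fibZ (2 * ((n : ℤ) + k + 2) + t) : ℚ) / (k + 1) =
      (3 ^ (n + 1) * (fibZ (2 * n + 2 + t) : ℚ) - fibZ t) / (n + 1)) ∧
    (∑ k ∈ range (n + 1),
      (n.choose k : ℚ) * (-1) ^ k * (3 : ℚ) ^ (n - k) * (lucasZ (2 * ((n : ℤ) + k + 2) + t) : ℚ) / (k + 1) =
      (3 ^ (n + 1) * (lucasZ (2 * n + 2 + t) : ℚ) - lucasZ t) / (n + 1)) := by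
  refine ⟨sum_choose_mul_three_pow_mul_div_succ_of_binet (√5)⁻¹ (-(√5)⁻¹) (fun m => ?_) t n,
    sum_choose_mul_three_pow_mul_div_succ_of_binet 1 1 (fun m => ?_) t n⟩
  · rw [fibZ_eq_intFib, Real.coe_intFib_eq]
    ring
  · rw [cast_lucasZ, one_mul, one_mul]
end

section
/- For any integers r, s, t and non-negative integer n: sum_{k=0}^n binom(n,k) * (-1)^(r(n-k)) * F_r^(k+2) * F_s^(n-k) * F_{s(k+2)-r(n-k)+t} / ((k+1)(k+2)) = -((-1)^(t+1) * F_s^(n+1) * F_{r+s} * F_{r(n+1)-t} - F_t * F_{r+s}^(n+2)) / ((n+1)(n+2)) + (-1)^(s+t) * F_s^(n+1) * F_r * F_{r(n+1)-s-t} / (n+2). -/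
open Finset

/-!
By Binet's formula and `φ ψ = -1`, the `k`-th summand times `√5` is
`w_k (x^(k+2) y^(n-k) φ^t - x'^(k+2) y'^(n-k) ψ^t)` with `x = F_r φ^s`, `y = F_s ψ^r`,
`x' = F_r ψ^s`, `y' = F_s φ^r`, and `w_k = C(n,k) / ((k+1)(k+2)) = C(n+2,k+2) / ((n+1)(n+2))`.
Each of the two sums is therefore the binomial expansion of `(x + y)^(n+2)` without its two
lowest terms, and `x + y = x' + y' = F_{r+s}`. Reading the leftover terms back through Binet's
formula gives the right-hand side.
-/

theorem sum_range_pow_mul_pow_mul_choose_add_two {R : Type*} [CommRing R] (x y : R) (n : ℕ) :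
    ∑ k ∈ range (n + 1), x ^ (k + 2) * y ^ (n - k) * ((n + 2).choose (k + 2) : R) =
      (x + y) ^ (n + 2) - y ^ (n + 2) - (n + 2) * x * y ^ (n + 1) := by
  rw [add_pow, sum_range_succ' _ (n + 2), sum_range_succ' _ (n + 1)]
  simp only [zero_add, Nat.choose_zero_right, Nat.choose_one_right, Nat.reduceSubDiff]
  push_cast
  ring

theorem choose_div_eq_choose_add_two_div {K : Type*} [Field K] [CharZero K] (n k : ℕ) :
    (n.choose k : K) / ((k + 1) * (k + 2)) =
      ((n + 2).choose (k + 2) : K) / ((n + 1) * (n + 2)) := by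
  have h₁ : ((n + 1 : ℕ) : K) * n.choose k = (n + 1).choose (k + 1) * (k + 1) := by
    exact_mod_cast Nat.add_one_mul_choose_eq n k
  have h₂ : ((n + 2 : ℕ) : K) * (n + 1).choose (k + 1) = (n + 2).choose (k + 2) * (k + 2) := by
    exact_mod_cast Nat.add_one_mul_choose_eq (n + 1) (k + 1)
  push_cast at h₁ h₂
  have h2 (m : ℕ) : (m + 2 : K) ≠ 0 := by exact_mod_cast (m + 1).succ_ne_zero
  rw [div_eq_div_iff (mul_ne_zero (Nat.cast_add_one_ne_zero k) (h2 k))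
    (mul_ne_zero (Nat.cast_add_one_ne_zero n) (h2 n))]
  linear_combination (n + 2 : K) * h₁ + (k + 1 : K) * h₂

open Real
open scoped goldenRatio

theorem goldenRatio_zpow_neg (u : ℤ) : φ ^ (-u) = (-1) ^ u * ψ ^ u := by
  rw [zpow_neg, ← inv_zpow, inv_goldenRatio, neg_eq_neg_one_mul, mul_zpow]

theorem goldenConj_zpow_neg (u : ℤ) : ψ ^ (-u) = (-1) ^ u * φ ^ u := by
  rw [zpow_neg, ← inv_zpow, inv_goldenConj, neg_eq_neg_one_mul, mul_zpow]

theorem fibZ_mul_sqrt_five (m : ℤ) : (fibZ m : ℝ) * √5 = φ ^ m - ψ ^ m := by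
  have hfib (N : ℕ) : (Nat.fib N : ℝ) * √5 = φ ^ N - ψ ^ N := by
    rw [coe_fib_eq, div_mul_cancel₀ _ (by positivity)]
  obtain ⟨N, rfl | rfl⟩ := Int.eq_nat_or_neg m
  · simp [fibZ, hfib]
  · rcases N.eq_zero_or_pos with rfl | hN
    · simp [fibZ]
    simp only [fibZ, Left.nonneg_neg_iff, Nat.cast_nonpos, hN.ne', if_false, neg_neg,
      Int.toNat_natCast, goldenRatio_zpow_neg, goldenConj_zpow_neg, zpow_natCast]
    push_cast
    linear_combination -(-1 : ℝ) ^ N * hfib N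

theorem neg_one_zpow_mul_fibZ_sub (m u : ℤ) :
    (-1) ^ u * (fibZ (m - u) : ℝ) * √5 = φ ^ m * ψ ^ u - ψ ^ m * φ ^ u := by
  have hsq : ((-1 : ℝ) ^ u) ^ 2 = 1 := by
    rw [← zpow_natCast, ← zpow_mul, mul_comm, zpow_mul]; norm_num
  rw [mul_assoc, fibZ_mul_sqrt_five, sub_eq_add_neg m u, zpow_add₀ goldenRatio_ne_zero,
    zpow_add₀ goldenConj_ne_zero, goldenRatio_zpow_neg, goldenConj_zpow_neg]
  linear_combination (φ ^ m * ψ ^ u - ψ ^ m * φ ^ u) * hsq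

theorem fibZ_add_eq_mul_add_mul (r s : ℤ) :
    (fibZ (r + s) : ℝ) = fibZ r * φ ^ s + fibZ s * ψ ^ r := by
  apply mul_right_cancel₀ (by positivity : √5 ≠ 0)
  rw [add_mul, mul_right_comm, mul_right_comm (fibZ s : ℝ), fibZ_mul_sqrt_five,
    fibZ_mul_sqrt_five, fibZ_mul_sqrt_five, zpow_add₀ goldenRatio_ne_zero,
    zpow_add₀ goldenConj_ne_zero]
  ring

theorem neg_one_zpow_mul_fibZ_pow_mul_fibZ (r s t : ℤ) (K M : ℕ) :
    (-1) ^ (r * M) * (fibZ r : ℝ) ^ K * (fibZ s : ℝ) ^ M * fibZ (s * K - r * M + t) * √5 =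
      (fibZ r * φ ^ s) ^ K * (fibZ s * ψ ^ r) ^ M * φ ^ t -
        (fibZ r * ψ ^ s) ^ K * (fibZ s * φ ^ r) ^ M * ψ ^ t := by
  have h := neg_one_zpow_mul_fibZ_sub (s * K + t) (r * M)
  rw [zpow_add₀ goldenRatio_ne_zero, zpow_add₀ goldenConj_ne_zero, zpow_mul φ, zpow_mul ψ,
    zpow_mul φ, zpow_mul ψ, zpow_natCast, zpow_natCast, zpow_natCast, zpow_natCast] at h
  rw [show s * K - r * M + t = s * K + t - r * M by ring]
  linear_combination ((fibZ r : ℝ) ^ K * (fibZ s : ℝ) ^ M) * h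

theorem choose_div_mul_fibZ_mul_sqrt_five (r s t : ℤ) {n k : ℕ} (hk : k ≤ n) :
    (n.choose k : ℝ) * (-1) ^ (r * ((n : ℤ) - k)) * (fibZ r : ℝ) ^ (k + 2) *
        (fibZ s : ℝ) ^ (n - k) * fibZ (s * (k + 2) - r * ((n : ℤ) - k) + t) /
        ((k + 1) * (k + 2)) * (√5 * ((n + 1) * (n + 2))) =
      (fibZ r * φ ^ s) ^ (k + 2) * (fibZ s * ψ ^ r) ^ (n - k) * (n + 2).choose (k + 2) * φ ^ t -
        (fibZ r * ψ ^ s) ^ (k + 2) * (fibZ s * φ ^ r) ^ (n - k) * (n + 2).choose (k + 2) *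
          ψ ^ t := by
  have hweight : (n.choose k : ℝ) / ((k + 1) * (k + 2)) * ((n + 1) * (n + 2)) =
      (n + 2).choose (k + 2) := by
    rw [choose_div_eq_choose_add_two_div, div_mul_cancel₀]
    exact mul_ne_zero (Nat.cast_add_one_ne_zero n) (by exact_mod_cast (n + 1).succ_ne_zero)
  have h := neg_one_zpow_mul_fibZ_pow_mul_fibZ r s t (k + 2) (n - k)
  rw [Nat.cast_sub hk, Nat.cast_add, Nat.cast_two] at h
  linear_combination (-1) ^ (r * ((n : ℤ) - k)) * (fibZ r : ℝ) ^ (k + 2) *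
    (fibZ s : ℝ) ^ (n - k) * fibZ (s * (k + 2) - r * ((n : ℤ) - k) + t) * √5 * hweight +
    ((n + 2).choose (k + 2) : ℝ) * h

theorem sum_choose_div_mul_fibZ_mul_sqrt_five (r s t : ℤ) (n : ℕ) :
    (∑ k ∈ range (n + 1), (n.choose k : ℝ) * (-1) ^ (r * ((n : ℤ) - k)) *
        (fibZ r : ℝ) ^ (k + 2) * (fibZ s : ℝ) ^ (n - k) *
        fibZ (s * (k + 2) - r * ((n : ℤ) - k) + t) / ((k + 1) * (k + 2))) *
        (√5 * ((n + 1) * (n + 2))) =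
      ((fibZ (r + s) : ℝ) ^ (n + 2) - (fibZ s * ψ ^ r) ^ (n + 2) -
          (n + 2) * (fibZ r * φ ^ s) * (fibZ s * ψ ^ r) ^ (n + 1)) * φ ^ t -
        ((fibZ (r + s) : ℝ) ^ (n + 2) - (fibZ s * φ ^ r) ^ (n + 2) -
          (n + 2) * (fibZ r * ψ ^ s) * (fibZ s * φ ^ r) ^ (n + 1)) * ψ ^ t := by
  rw [sum_mul, sum_congr rfl fun k hk =>
      choose_div_mul_fibZ_mul_sqrt_five r s t (Nat.lt_succ_iff.mp (mem_range.mp hk)),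
    sum_sub_distrib, ← sum_mul, ← sum_mul, sum_range_pow_mul_pow_mul_choose_add_two,
    sum_range_pow_mul_pow_mul_choose_add_two, ← fibZ_add_eq_mul_add_mul,
    add_comm (fibZ r * ψ ^ s : ℝ), ← fibZ_add_eq_mul_add_mul, add_comm s]

theorem stmt_17 (r s t : ℤ) (n : ℕ) :
    ∑ k ∈ range (n + 1),
      (n.choose k : ℚ) * (-1) ^ (r * ((n : ℤ) - k)) * (fibZ r : ℚ) ^ (k + 2) *
        (fibZ s : ℚ) ^ (n - k) * (fibZ (s * (k + 2) - r * ((n : ℤ) - k) + t) : ℚ) /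
        ((k + 1) * (k + 2)) =
    -(((-1) ^ (t + 1) * (fibZ s : ℚ) ^ (n + 1) * (fibZ (r + s) : ℚ) * (fibZ (r * (n + 1) - t) : ℚ) -
      (fibZ t : ℚ) * (fibZ (r + s) : ℚ) ^ (n + 2)) / ((n + 1) * (n + 2))) +
    (-1) ^ (s + t) * (fibZ s : ℚ) ^ (n + 1) * (fibZ r : ℚ) *
      (fibZ (r * (n + 1) - s - t) : ℚ) / (n + 2) := by
  apply Rat.cast_injective (α := ℝ)
  push_cast
  apply mul_right_cancel₀ (b := √5 * ((n + 1) * (n + 2))) (by positivity)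
  have hclear (U V : ℝ) : (-(U / ((n + 1) * (n + 2))) + V / (n + 2)) *
      (√5 * ((n + 1) * (n + 2))) = (-U + V * (n + 1)) * √5 := by
    field_simp
  have hpow (x : ℝ) : x ^ (r * ((n : ℤ) + 1)) = (x ^ r) ^ (n + 1) := by
    rw [zpow_mul]; exact_mod_cast zpow_natCast (x ^ r) (n + 1)
  have hA := neg_one_zpow_mul_fibZ_sub (r * (n + 1)) t
  have hB := neg_one_zpow_mul_fibZ_sub (r * (n + 1)) (s + t)
  rw [hpow, hpow] at hA hB
  rw [← sub_sub, zpow_add₀ goldenRatio_ne_zero, zpow_add₀ goldenConj_ne_zero] at hB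
  have hD := fibZ_add_eq_mul_add_mul r s
  have hD' := fibZ_add_eq_mul_add_mul s r
  rw [add_comm s] at hD'
  rw [sum_choose_div_mul_fibZ_mul_sqrt_five, hclear, zpow_add₀ (by norm_num : (-1 : ℝ) ≠ 0),
    zpow_one]
  linear_combination (-(fibZ s : ℝ) ^ (n + 1) * fibZ (r + s)) * hA -
    (fibZ (r + s) : ℝ) ^ (n + 2) * fibZ_mul_sqrt_five t -
    ((n + 1) * (fibZ s : ℝ) ^ (n + 1) * fibZ r) * hB +
    ((fibZ s : ℝ) ^ (n + 1) * (ψ ^ r) ^ (n + 1) * φ ^ t) * hD -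
    ((fibZ s : ℝ) ^ (n + 1) * (φ ^ r) ^ (n + 1) * ψ ^ t) * hD'
end
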